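/- Modified heavy-ball dynamical system: let f : ℝ^n → ℝ be convex, coercive, and continuously differentiable, with argmin f nonempty. Let α > θ > 0 and let x : [0,∞) → ℝ^n be twice continuously differentiable and satisfy, for all t ≥ 0, the ODE ẍ(t) + α ẋ(t) + ∇f(x(t)) = 0 together with the constraint ‖ẍ(t)‖ ≤ θ‖ẋ(t)‖. Then f(x(t)) − min f = O(1/t): there exists C > 0 such that f(x(t)) − min f ≤ C/t for all t ≥ 1. Moreover, the energy ξ_f(t) := f(x(t)) + ‖ẋ(t)‖²/2 − min f is non-increasing in t. -/

import Mathlib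

/-!
Along the trajectory the energy `ξ = f(x) - min f + ‖ẋ‖²/2` has derivative `-α‖ẋ‖² ≤ 0`.
The first-order convexity inequality `f(x) - f(x⋆) ≤ ⟪∇f(x), x - x⋆⟫`, combined with the ODE,
shows that `L(t) = (t + 3/(2α)) ξ(t) + ⟪ẋ, x - x⋆⟫ + α‖x - x⋆‖²/2` is non-increasing as well,
while `‖ẋ + α(x - x⋆)‖² ≥ 0` gives `L(t) ≥ t ξ(t)`. Hence `t ξ(t) ≤ L(0)` for `t ≥ 0`.
-/

open scoped RealInnerProductSpace

theorem ConvexOn.add_le_of_hasFDerivAt {E : Type*} [NormedAddCommGroup E] [NormedSpace ℝ E]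
    {s : Set E} {f : E → ℝ} {f' : E →L[ℝ] ℝ} {p y : E} (hf : ConvexOn ℝ s f)
    (hp : p ∈ s) (hy : y ∈ s) (hf' : HasFDerivAt f f' p) :
    f p + f' (y - p) ≤ f y := by
  set l : ℝ →ᵃ[ℝ] E := AffineMap.lineMap p y
  have hderiv : HasDerivAt (f ∘ l) (f' (y - p)) 0 :=
    hf'.comp_hasDerivAt_of_eq 0 AffineMap.hasDerivAt_lineMap
      (AffineMap.lineMap_apply_zero p y).symm
  have := (hf.comp_affineMap l).le_slope_of_hasDerivAt (by simpa [l] using hp)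
    (by simpa [l] using hy) zero_lt_one hderiv
  simpa [l, slope_def_field, le_sub_iff_add_le'] using this

theorem neg_sq_norm_div_le_inner_add_mul_sq_norm {E : Type*} [NormedAddCommGroup E]
    [InnerProductSpace ℝ E] {a : ℝ} (ha : 0 < a) (v w : E) :
    -(‖v‖ ^ 2 / (2 * a)) ≤ ⟪v, w⟫ + a * ‖w‖ ^ 2 / 2 := by
  have h := norm_add_sq_real v (a • w)
  rw [norm_smul, real_inner_smul_right, Real.norm_of_nonneg ha.le] at h
  rw [neg_le_iff_add_nonneg', div_add' _ _ _ (by positivity)]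
  have : 0 ≤ ‖v + a • w‖ ^ 2 := sq_nonneg _
  apply div_nonneg _ (by positivity)
  nlinarith

section HeavyBall

variable {E : Type*} [NormedAddCommGroup E] {f : E → ℝ} {x x' x'' : ℝ → E} {α t : ℝ} {z : E}

noncomputable def heavyBallEnergy (f : E → ℝ) (x x' : ℝ → E) (z : E) (t : ℝ) : ℝ :=
  f (x t) + ‖x' t‖ ^ 2 / 2 - f z

theorem sub_le_heavyBallEnergy : f (x t) - f z ≤ heavyBallEnergy f x x' z t := by
  unfold heavyBallEnergy
  linarith [sq_nonneg ‖x' t‖]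

theorem sq_norm_div_two_le_heavyBallEnergy (hz : f z ≤ f (x t)) :
    ‖x' t‖ ^ 2 / 2 ≤ heavyBallEnergy f x x' z t := by
  unfold heavyBallEnergy
  linarith

variable [InnerProductSpace ℝ E]

noncomputable def heavyBallLyapunov (f : E → ℝ) (x x' : ℝ → E) (α : ℝ) (z : E) (t : ℝ) : ℝ :=
  (t + 3 / (2 * α)) * heavyBallEnergy f x x' z t + ⟪x' t, x t - z⟫ + α * ‖x t - z‖ ^ 2 / 2

theorem mul_heavyBallEnergy_le_heavyBallLyapunov (hα : 0 < α) (hz : f z ≤ f (x t)) :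
    t * heavyBallEnergy f x x' z t ≤ heavyBallLyapunov f x x' α z t := by
  set ξ := heavyBallEnergy f x x' z t
  have hcross := neg_sq_norm_div_le_inner_add_mul_sq_norm hα (x' t) (x t - z)
  have hkin : ‖x' t‖ ^ 2 / 2 ≤ ξ := sq_norm_div_two_le_heavyBallEnergy hz
  have hkin' : ‖x' t‖ ^ 2 / (2 * α) ≤ ξ / α := by
    rwa [← div_div, div_le_div_iff_of_pos_right hα]
  have hξ : 0 ≤ ξ / (2 * α) := div_nonneg (by linarith [sq_nonneg ‖x' t‖]) (by positivity)
  have hsplit : 3 / (2 * α) * ξ = ξ / α + ξ / (2 * α) := by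
    field_simp
    ring
  unfold heavyBallLyapunov
  rw [add_mul]
  linarith

variable [CompleteSpace E] {g : E → E}

theorem hasDerivAt_heavyBallEnergy (hf : ∀ p, HasGradientAt f (g p) p)
    (hx' : HasDerivAt x (x' t) t) (hx'' : HasDerivAt x' (x'' t) t)
    (hode : x'' t + α • x' t + g (x t) = 0) :
    HasDerivAt (heavyBallEnergy f x x' z) (-(α * ‖x' t‖ ^ 2)) t := by
  have hfx : HasDerivAt (fun t => f (x t)) ⟪g (x t), x' t⟫ t := by
    have h := (hf (x t)).hasFDerivAt.comp_hasDerivAt t hx'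
    rwa [InnerProductSpace.toDual_apply_apply] at h
  have hgx : g (x t) = -(x'' t + α • x' t) := eq_neg_of_add_eq_zero_right hode
  refine ((hfx.add (hx''.norm_sq.div_const 2)).sub_const (f z)).congr_deriv ?_
  rw [hgx, inner_neg_left, inner_add_left, real_inner_smul_left, real_inner_self_eq_norm_sq,
    real_inner_comm]
  ring

theorem antitoneOn_heavyBallEnergy (hα : 0 ≤ α) (hf : ∀ p, HasGradientAt f (g p) p)
    (hx' : ∀ t, HasDerivAt x (x' t) t) (hx'' : ∀ t, HasDerivAt x' (x'' t) t)
    (hode : ∀ t, 0 ≤ t → x'' t + α • x' t + g (x t) = 0) :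
    AntitoneOn (heavyBallEnergy f x x' z) (Set.Ici 0) := by
  have hderiv : ∀ t ∈ Set.Ici (0 : ℝ),
      HasDerivAt (heavyBallEnergy f x x' z) (-(α * ‖x' t‖ ^ 2)) t := fun t ht =>
    hasDerivAt_heavyBallEnergy hf (hx' t) (hx'' t) (hode t ht)
  refine antitoneOn_of_hasDerivWithinAt_nonpos (convex_Ici 0)
    (fun t ht => (hderiv t ht).continuousAt.continuousWithinAt)
    (fun t ht => (hderiv t (interior_subset ht)).hasDerivWithinAt) fun t _ => ?_
  have := mul_nonneg hα (sq_nonneg ‖x' t‖)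
  linarith

theorem heavyBallEnergy_le_of_convexOn (hconv : ConvexOn ℝ Set.univ f)
    (hf : ∀ p, HasGradientAt f (g p) p) (hode : x'' t + α • x' t + g (x t) = 0) :
    heavyBallEnergy f x x' z t ≤ ‖x' t‖ ^ 2 / 2 - ⟪x'' t + α • x' t, x t - z⟫ := by
  have hgx : g (x t) = -(x'' t + α • x' t) := eq_neg_of_add_eq_zero_right hode
  have h := hconv.add_le_of_hasFDerivAt (Set.mem_univ (x t)) (Set.mem_univ z)
    (hf (x t)).hasFDerivAt
  rw [InnerProductSpace.toDual_apply_apply, hgx, ← neg_sub (x t) z, inner_neg_neg] at h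
  unfold heavyBallEnergy
  linarith

theorem antitoneOn_heavyBallLyapunov (hα : 0 < α) (hconv : ConvexOn ℝ Set.univ f)
    (hf : ∀ p, HasGradientAt f (g p) p)
    (hx' : ∀ t, HasDerivAt x (x' t) t) (hx'' : ∀ t, HasDerivAt x' (x'' t) t)
    (hode : ∀ t, 0 ≤ t → x'' t + α • x' t + g (x t) = 0) :
    AntitoneOn (heavyBallLyapunov f x x' α z) (Set.Ici 0) := by
  set ξ := heavyBallEnergy f x x' z
  have hderiv : ∀ t ∈ Set.Ici (0 : ℝ), HasDerivAt (heavyBallLyapunov f x x' α z)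
      (ξ t - (t + 3 / (2 * α)) * (α * ‖x' t‖ ^ 2) + ‖x' t‖ ^ 2
        + ⟪x'' t + α • x' t, x t - z⟫) t := by
    intro t ht
    have hξ := hasDerivAt_heavyBallEnergy (z := z) hf (hx' t) (hx'' t) (hode t ht)
    have hxz := (hx' t).sub_const z
    refine ((((hasDerivAt_id t).add_const _).mul hξ).add ((hx'' t).inner ℝ hxz)).add
      ((hxz.norm_sq.const_mul α).div_const 2) |>.congr_deriv ?_
    rw [inner_add_left, real_inner_smul_left, real_inner_self_eq_norm_sq,
      real_inner_comm (x' t)]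
    simp only [id]
    ring
  refine antitoneOn_of_hasDerivWithinAt_nonpos (convex_Ici 0)
    (fun t ht => (hderiv t ht).continuousAt.continuousWithinAt)
    (fun t ht => (hderiv t (interior_subset ht)).hasDerivWithinAt) fun t ht => ?_
  rw [interior_Ici] at ht
  have hξ := heavyBallEnergy_le_of_convexOn (z := z) hconv hf (hode t ht.le)
  have hcancel : 3 / (2 * α) * (α * ‖x' t‖ ^ 2) = 3 / 2 * ‖x' t‖ ^ 2 := by
    field_simp
  have hdamp := mul_nonneg (mul_nonneg ht.le hα.le) (sq_nonneg ‖x' t‖)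
  rw [add_mul]
  linarith

end HeavyBall

theorem pigd_stmt17_general
    {n : ℕ} (f : EuclideanSpace ℝ (Fin n) → ℝ)
    (f' : EuclideanSpace ℝ (Fin n) → EuclideanSpace ℝ (Fin n))
    (hfconv : ConvexOn ℝ Set.univ f)
    (hf' : ∀ p, HasGradientAt f (f' p) p)
    -- `argmin f` is nonempty and `f xstar = min f`
    (xstar : EuclideanSpace ℝ (Fin n)) (hxstar : ∀ y, f xstar ≤ f y)
    (α θ : ℝ) (hθ : 0 < θ) (hαθ : θ < α)
    -- `x` is twice continuously differentiable, with derivatives `x'` and `x''`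
    (x x' x'' : ℝ → EuclideanSpace ℝ (Fin n))
    (hx' : ∀ t, HasDerivAt x (x' t) t)
    (hx'' : ∀ t, HasDerivAt x' (x'' t) t)
    -- the ODE and the extra constraint, for all `t ≥ 0`
    (hode : ∀ t, 0 ≤ t → x'' t + α • x' t + f' (x t) = 0) :
    (∃ C : ℝ, 0 < C ∧ ∀ t : ℝ, 1 ≤ t → f (x t) - f xstar ≤ C / t) ∧
      AntitoneOn (fun t => f (x t) + ‖x' t‖ ^ 2 / 2 - f xstar) (Set.Ici (0 : ℝ)) := by
  have hα : 0 < α := hθ.trans hαθ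
  set L := heavyBallLyapunov f x x' α xstar
  have hL := antitoneOn_heavyBallLyapunov (z := xstar) hα hfconv hf' hx' hx'' hode
  have hL0 : 0 ≤ L 0 := by
    simpa using mul_heavyBallEnergy_le_heavyBallLyapunov (t := 0) (x' := x') hα (hxstar (x 0))
  refine ⟨⟨L 0 + 1, by linarith, fun t ht => ?_⟩,
    antitoneOn_heavyBallEnergy hα.le hf' hx' hx'' hode⟩
  have ht0 : 0 < t := zero_lt_one.trans_le ht
  calc f (x t) - f xstar ≤ heavyBallEnergy f x x' xstar t := sub_le_heavyBallEnergy
    _ ≤ L t / t := by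
      rw [le_div_iff₀' ht0]
      exact mul_heavyBallEnergy_le_heavyBallLyapunov hα (hxstar (x t))
    _ ≤ (L 0 + 1) / t := by
      gcongr
      linarith [hL Set.self_mem_Ici ht0.le ht0.le]

/-- modified heavy-ball dynamical system. Let `f : ℝⁿ → ℝ` be convex,
coercive, continuously differentiable, with `argmin f` nonempty. Let `α > θ > 0` and let
`x : [0,∞) → ℝⁿ` be twice continuously differentiable satisfying
`ẍ(t) + α ẋ(t) + ∇f(x(t)) = 0` and `‖ẍ(t)‖ ≤ θ‖ẋ(t)‖` for all `t ≥ 0`. Then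
`f(x(t)) − min f ≤ C/t` for all `t ≥ 1`, and the energy
`ξ_f(t) = f(x(t)) + ‖ẋ(t)‖²/2 − min f` is non-increasing on `[0,∞)`. -/
theorem pigd_stmt17
    {n : ℕ} (f : EuclideanSpace ℝ (Fin n) → ℝ)
    (f' : EuclideanSpace ℝ (Fin n) → EuclideanSpace ℝ (Fin n))
    (hfconv : ConvexOn ℝ Set.univ f)
    (hf' : ∀ p, HasGradientAt f (f' p) p)
    (hf'cont : Continuous f')
    -- `f` is coercive
    (hcoer : Filter.Tendsto f (Filter.comap norm Filter.atTop) Filter.atTop)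
    -- `argmin f` is nonempty and `f xstar = min f`
    (xstar : EuclideanSpace ℝ (Fin n)) (hxstar : ∀ y, f xstar ≤ f y)
    (α θ : ℝ) (hθ : 0 < θ) (hαθ : θ < α)
    -- `x` is twice continuously differentiable, with derivatives `x'` and `x''`
    (x x' x'' : ℝ → EuclideanSpace ℝ (Fin n))
    (hx' : ∀ t, HasDerivAt x (x' t) t)
    (hx'' : ∀ t, HasDerivAt x' (x'' t) t)
    (hx''cont : Continuous x'')
    -- the ODE and the extra constraint, for all `t ≥ 0`
    (hode : ∀ t, 0 ≤ t → x'' t + α • x' t + f' (x t) = 0)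
    (hcons : ∀ t, 0 ≤ t → ‖x'' t‖ ≤ θ * ‖x' t‖) :
    (∃ C : ℝ, 0 < C ∧ ∀ t : ℝ, 1 ≤ t → f (x t) - f xstar ≤ C / t) ∧
      AntitoneOn (fun t => f (x t) + ‖x' t‖ ^ 2 / 2 - f xstar) (Set.Ici (0 : ℝ)) :=
  pigd_stmt17_general f f' hfconv hf' xstar hxstar α θ hθ hαθ x x' x'' hx' hx'' hode
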